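/- arXiv:2605.00041 — 10 statements merged into one kernel-verified Lean document; each statement's English description precedes it below -/
import Mathlib

section
/- Natural conjugacy is an equivalence relation: for any semigroup S, the relation ∼ₙ on S, defined by a ∼ₙ b iff there exist g,h ∈ S¹ with ag = gb, bh = ha, hag = b, and gbh = a, is reflexive, symmetric, and transitive. -/
/-- Natural conjugacy on a semigroup `S`, with conjugators in `S¹ = WithOne S`. -/
def nconj {S : Type*} [Semigroup S] (a b : S) : Prop :=
  ∃ g h : WithOne S, (a : WithOne S) * g = g * b ∧ (b : WithOne S) * h = h * a ∧
    h * a * g = (b : WithOne S) ∧ g * b * h = (a : WithOne S)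

theorem nconj_equivalence {S : Type*} [Semigroup S] :
    Equivalence (nconj (S := S)) := by
  constructor
  · intro a
    exact ⟨1, 1, by simp, by simp, by simp, by simp⟩
  · rintro a b ⟨g, h, h1, h2, h3, h4⟩
    exact ⟨h, g, h2, h1, h4, h3⟩
  · rintro a b c ⟨g, h, h1, h2, h3, h4⟩ ⟨g', h', h1', h2', h3', h4'⟩
    refine ⟨g * g', h' * h, ?_, ?_, ?_, ?_⟩
    · rw [← mul_assoc, h1, mul_assoc, h1', ← mul_assoc]
    · rw [← mul_assoc, h2', mul_assoc, h2, ← mul_assoc]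
    · calc h' * h * a * (g * g') = h' * (h * a * g) * g' := by
            simp only [mul_assoc]
        _ = h' * b * g' := by rw [h3]
        _ = c := h3'
    · calc g * g' * c * (h' * h) = g * (g' * c * h') * h := by
            simp only [mul_assoc]
        _ = g * b * h := by rw [h4']
        _ = a := h4
end

section
/- If S is a semigroup, a,b ∈ S, and g,h ∈ S¹ satisfy ag = gb, hag = b, and gbh = a, then all eight conditions hold: ag = gb, bh = ha, hag = b, gbh = a, hgb = b, gha = a, bhg = b, and agh = a. -/
theorem conds_i_iii_iv_imply_all {S : Type*} [Semigroup S] (a b : S) (g h : WithOne S)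
    (h1 : (a : WithOne S) * g = g * b)
    (h3 : h * a * g = (b : WithOne S))
    (h4 : g * b * h = (a : WithOne S)) :
    (a : WithOne S) * g = g * b ∧ (b : WithOne S) * h = h * a ∧
    h * a * g = (b : WithOne S) ∧ g * b * h = (a : WithOne S) ∧
    h * g * b = (b : WithOne S) ∧ g * h * a = (a : WithOne S) ∧
    (b : WithOne S) * (h * g) = b ∧ (a : WithOne S) * (g * h) = a := by
  have hgb : h * g * b = (b : WithOne S) := by
    rw [mul_assoc, ← h1, ← mul_assoc, h3]
  have agh : (a : WithOne S) * (g * h) = a := by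
    rw [← mul_assoc, h1, h4]
  have bh : (b : WithOne S) * h = h * a := by
    rw [← h3, mul_assoc, mul_assoc, agh]
  have bhg : (b : WithOne S) * (h * g) = b := by
    rw [← mul_assoc, bh, h3]
  have gha : g * h * a = (a : WithOne S) := by
    rw [mul_assoc, ← bh, ← mul_assoc, h4]
  exact ⟨h1, bh, h3, h4, hgb, gha, bhg, agh⟩
end

section
/- If S is a semigroup, a,b ∈ S, and g,h ∈ S¹ satisfy ag = gb, hag = b, and agh = a, then all eight conditions hold: ag = gb, bh = ha, hag = b, gbh = a, hgb = b, gha = a, bhg = b, and agh = a. -/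
theorem conds_i_iii_viii_imply_all {S : Type*} [Semigroup S] (a b : S) (g h : WithOne S)
    (h1 : (a : WithOne S) * g = g * b)
    (h3 : h * a * g = (b : WithOne S))
    (h8 : (a : WithOne S) * (g * h) = a) :
    (a : WithOne S) * g = g * b ∧ (b : WithOne S) * h = h * a ∧
    h * a * g = (b : WithOne S) ∧ g * b * h = (a : WithOne S) ∧
    h * g * b = (b : WithOne S) ∧ g * h * a = (a : WithOne S) ∧
    (b : WithOne S) * (h * g) = b ∧ (a : WithOne S) * (g * h) = a := by
  have h4 : g * b * h = (a : WithOne S) := by rw [← h1, mul_assoc, h8]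
  have h5 : h * g * b = (b : WithOne S) := by rw [mul_assoc, ← h1, ← mul_assoc, h3]
  have h2 : (b : WithOne S) * h = h * a := by
    rw [← h3, mul_assoc (h*a) g h, mul_assoc h a, h8]
  have h6 : g * h * a = (a : WithOne S) := by
    conv_lhs => rw [← h8]
    rw [mul_assoc g h, ← mul_assoc h a, ← mul_assoc (h*(a:WithOne S)) g h, h3, ← mul_assoc, h4]
  have h7 : (b : WithOne S) * (h * g) = b := by
    rw [← mul_assoc, h2, h3]
  exact ⟨h1, h2, h3, h4, h5, h6, h7, h8⟩
end

section
/- For a semigroup S and fixed g,h ∈ S¹, the set K_{g,h} = {(a,b) ∈ S × S : ag = gb, bh = ha, hag = b, gbh = a} is a subsemigroup of S × S. -/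
/-- The set of pairs conjugate via the fixed conjugators `g, h`. -/
def Kset {S : Type*} [Semigroup S] (g h : WithOne S) : Set (S × S) :=
  { p | (p.1 : WithOne S) * g = g * p.2 ∧ (p.2 : WithOne S) * h = h * p.1 ∧
      h * p.1 * g = (p.2 : WithOne S) ∧ g * p.2 * h = (p.1 : WithOne S) }

theorem Kset_mul_mem {S : Type*} [Semigroup S] (g h : WithOne S)
    (p q : S × S) (hp : p ∈ Kset g h) (hq : q ∈ Kset g h) :
    p * q ∈ Kset g h := by
  obtain ⟨h1, h2, h3, h4⟩ := hp
  obtain ⟨k1, k2, k3, k4⟩ := hq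
  refine ⟨?_, ?_, ?_, ?_⟩ <;>
    simp only [Prod.fst_mul, Prod.snd_mul, WithOne.coe_mul]
  · rw [mul_assoc, k1, ← mul_assoc, h1, mul_assoc]
  · rw [mul_assoc, k2, ← mul_assoc, h2, mul_assoc]
  · rw [← mul_assoc, mul_assoc (h * (p.1 : WithOne S)), k1, ← mul_assoc, h3]
  · rw [← mul_assoc, mul_assoc (g * (p.2 : WithOne S)), k2, ← mul_assoc, h4]
end

section
/- In any semigroup S, natural conjugacy is contained in Green's D-relation: if a ∼ₙ b then a D b. -/
/-- Green's L relation: `S¹ x = S¹ y`. -/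
def greenL {S : Type*} [Semigroup S] (x y : WithOne S) : Prop :=
  Set.range (fun s : WithOne S => s * x) = Set.range (fun s : WithOne S => s * y)

/-- Green's R relation: `x S¹ = y S¹`. -/
def greenR {S : Type*} [Semigroup S] (x y : WithOne S) : Prop :=
  Set.range (fun s : WithOne S => x * s) = Set.range (fun s : WithOne S => y * s)

/-- Green's D relation: `D = L ∘ R`. -/
def greenD {S : Type*} [Semigroup S] (x y : WithOne S) : Prop :=
  ∃ z : WithOne S, greenL x z ∧ greenR z y

theorem nconj_subset_greenD {S : Type*} [Semigroup S] (a b : S)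
    (hconj : ∃ g h : WithOne S, (a : WithOne S) * g = g * b ∧ (b : WithOne S) * h = h * a ∧
      h * a * g = (b : WithOne S) ∧ g * b * h = (a : WithOne S)) :
    greenD (a : WithOne S) (b : WithOne S) := by
  obtain ⟨g, h, h1, h2, h3, h4⟩ := hconj
  refine ⟨h * (a : WithOne S), ?_, ?_⟩
  · apply Set.eq_of_subset_of_subset
    · rintro x ⟨s, rfl⟩
      exact ⟨s * g, by simp only; rw [mul_assoc s g, ← h2, ← mul_assoc g, h4]⟩
    · rintro x ⟨s, rfl⟩
      exact ⟨s * h, by simp only [mul_assoc]⟩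
  · apply Set.eq_of_subset_of_subset
    · rintro x ⟨s, rfl⟩
      exact ⟨h * s, by simp only; rw [← mul_assoc, h2]⟩
    · rintro x ⟨s, rfl⟩
      exact ⟨g * s, by simp only; rw [← mul_assoc, h3]⟩
end

section
/- If e is an idempotent in a semigroup S and e ∼ₙ a, then a is also an idempotent. -/
theorem nconj_idempotent {S : Type*} [Semigroup S] (e a : S)
    (he : e * e = e)
    (hconj : ∃ g h : WithOne S, (e : WithOne S) * g = g * a ∧ (a : WithOne S) * h = h * e ∧
      h * e * g = (a : WithOne S) ∧ g * a * h = (e : WithOne S)) :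
    a * a = a := by
  obtain ⟨g, h, h1, _h2, h3, _h4⟩ := hconj
  have hee : (e : WithOne S) * e = e := by rw [← WithOne.coe_mul, he]
  have key : (a : WithOne S) * a = a := by
    calc (a : WithOne S) * a = h * e * g * a := by rw [h3]
      _ = h * e * (g * a) := by rw [mul_assoc]
      _ = h * e * (e * g) := by rw [h1]
      _ = h * (e * e) * g := by simp only [mul_assoc]
      _ = h * e * g := by rw [hee]
      _ = a := h3
  exact WithOne.coe_inj.mp (by rw [WithOne.coe_mul]; exact key)
end

section
/- In a semigroup with zero, the natural conjugacy class of 0 is {0}: if a ∼ₙ 0 then a = 0. -/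
namespace WithOne

variable {S : Type*} [MulZeroClass S]

theorem mul_coe_zero (g : WithOne S) : g * ((0 : S) : WithOne S) = (0 : S) := by
  induction g using WithOne.recOneCoe with
  | one => rw [one_mul]
  | coe x => rw [← coe_mul, mul_zero]

theorem coe_zero_mul (h : WithOne S) : ((0 : S) : WithOne S) * h = (0 : S) := by
  induction h using WithOne.recOneCoe with
  | one => rw [mul_one]
  | coe x => rw [← coe_mul, zero_mul]

end WithOne

theorem nconj_zero {S : Type*} [SemigroupWithZero S] (a : S)
    (hconj : ∃ g h : WithOne S, (a : WithOne S) * g = g * (0 : S) ∧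
      ((0 : S) : WithOne S) * h = h * a ∧
      h * a * g = ((0 : S) : WithOne S) ∧ g * (0 : S) * h = (a : WithOne S)) :
    a = 0 := by
  obtain ⟨g, h, -, -, -, hgh⟩ := hconj
  rw [WithOne.mul_coe_zero, WithOne.coe_zero_mul] at hgh
  exact (WithOne.coe_inj.mp hgh).symm
end

section
/- For a semigroup S and g,h ∈ S¹, if a ∈ D_{g,h}, then the whole H-class of a is contained in D_{g,h}. -/
/-- Green's H relation: `S¹ x = S¹ y` and `x S¹ = y S¹`. -/
def greenH {S : Type*} [Semigroup S] (x y : WithOne S) : Prop :=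
  (Set.range (fun s : WithOne S => s * x) = Set.range (fun s : WithOne S => s * y)) ∧
  (Set.range (fun s : WithOne S => x * s) = Set.range (fun s : WithOne S => y * s))

theorem Hclass_subset_Dset {S : Type*} [Semigroup S] (g h : WithOne S) (a c : S)
    (ha : g * h * a = (a : WithOne S) ∧ (a : WithOne S) * (g * h) = a)
    (hH : greenH (c : WithOne S) (a : WithOne S)) :
    g * h * c = (c : WithOne S) ∧ (c : WithOne S) * (g * h) = c := by
  obtain ⟨hL, hR⟩ := hH
  have hc1 : (c : WithOne S) ∈ Set.range (fun s : WithOne S => s * (c : WithOne S)) :=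
    ⟨1, one_mul _⟩
  rw [hL] at hc1
  obtain ⟨u, hu⟩ := hc1
  have hc2 : (c : WithOne S) ∈ Set.range (fun s : WithOne S => (c : WithOne S) * s) :=
    ⟨1, mul_one _⟩
  rw [hR] at hc2
  obtain ⟨v, hv⟩ := hc2
  simp only [] at hu hv
  constructor
  · calc g * h * c = g * h * (a * v) := by rw [hv]
    _ = g * h * a * v := by simp only [mul_assoc]
    _ = (a : WithOne S) * v := by rw [ha.1]
    _ = c := hv
  · calc (c : WithOne S) * (g * h) = u * a * (g * h) := by rw [hu]
    _ = u * ((a : WithOne S) * (g * h)) := by rw [mul_assoc]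
    _ = u * a := by rw [ha.2]
    _ = c := hu
end

section
/- For a semigroup S and g,h ∈ S¹, the map φ_{g,h} : D_{g,h} → D_{h,g} sending a to hag is a semigroup isomorphism from D_{g,h} onto D_{h,g}, with inverse φ_{h,g} : b ↦ gbh. -/
/-! `D_{g,h}` is the set of elements of the ideal `S ⊆ S¹` fixed on both sides by `gh`. Since
`(hg)(hag) = h(gh·a)g` and `(hag)(hg) = h(a·gh)g`, conjugation `a ↦ hag` maps `D_{g,h}` into
`D_{h,g}`, and `g(hag)h = gh·a·gh = a` shows `b ↦ gbh` is its inverse. Multiplicativity is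
`(hag)(hbg) = h(a·gh·b)g = h(ab)g`. -/

/-- The domain `D_{g,h}` viewed inside `S¹ = WithOne S`: coerced elements `a` of `S`
with `gh·a = a·gh = a`. -/
def Dset {S : Type*} [Semigroup S] (g h : WithOne S) : Set (WithOne S) :=
  { x | (∃ a : S, x = (a : WithOne S)) ∧ g * h * x = x ∧ x * (g * h) = x }

theorem WithOne.exists_mul_coe_mul_eq_coe {S : Type*} [Semigroup S] (x y : WithOne S) (a : S) :
    ∃ b : S, x * a * y = b := by
  induction x using WithOne.cases_on <;> induction y using WithOne.cases_on <;>
    simp [← WithOne.coe_mul]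

section Semigroup

variable {M : Type*} [Semigroup M] {g h x : M}

theorem conj_mul_conj_of_mul_eq_self (hx : x * (g * h) = x) (y : M) :
    h * x * g * (h * y * g) = h * (x * y) * g := by
  calc h * x * g * (h * y * g) = h * (x * (g * h) * y) * g := by simp only [mul_assoc]
    _ = h * (x * y) * g := by rw [hx]

theorem mul_conj_eq_conj_of_mul_eq_self (hx : g * h * x = x) :
    h * g * (h * x * g) = h * x * g := by
  calc h * g * (h * x * g) = h * (g * h * x) * g := by simp only [mul_assoc]
    _ = h * x * g := by rw [hx]

theorem conj_mul_eq_conj_of_mul_eq_self (hx : x * (g * h) = x) :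
    h * x * g * (h * g) = h * x * g := by
  calc h * x * g * (h * g) = h * (x * (g * h)) * g := by simp only [mul_assoc]
    _ = h * x * g := by rw [hx]

theorem conj_conj_eq_self (hl : g * h * x = x) (hr : x * (g * h) = x) :
    g * (h * x * g) * h = x := by
  calc g * (h * x * g) * h = g * h * x * (g * h) := by simp only [mul_assoc]
    _ = x := by rw [hl, hr]

end Semigroup

section Dset

variable {S : Type*} [Semigroup S] {g h x : WithOne S}

theorem conj_mem_Dset (hx : x ∈ Dset g h) : h * x * g ∈ Dset h g := by
  obtain ⟨⟨a, rfl⟩, hl, hr⟩ := hx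
  obtain ⟨b, hb⟩ := WithOne.exists_mul_coe_mul_eq_coe h g a
  exact ⟨⟨b, hb⟩, mul_conj_eq_conj_of_mul_eq_self hl, conj_mul_eq_conj_of_mul_eq_self hr⟩

theorem conj_conj_of_mem_Dset (hx : x ∈ Dset g h) : g * (h * x * g) * h = x :=
  conj_conj_eq_self hx.2.1 hx.2.2

end Dset

theorem phi_iso {S : Type*} [Semigroup S] (g h : WithOne S) :
    (∀ x ∈ Dset g h, h * x * g ∈ Dset h g) ∧
    (∀ y ∈ Dset h g, g * y * h ∈ Dset g h) ∧
    (∀ x ∈ Dset g h, g * (h * x * g) * h = x) ∧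
    (∀ y ∈ Dset h g, h * (g * y * h) * g = y) ∧
    (∀ x₁ ∈ Dset g h, ∀ x₂ ∈ Dset g h,
      h * (x₁ * x₂) * g = (h * x₁ * g) * (h * x₂ * g)) :=
  ⟨fun _ => conj_mem_Dset, fun _ => conj_mem_Dset, fun _ => conj_conj_of_mem_Dset,
    fun _ => conj_conj_of_mem_Dset,
    fun _ hx₁ x₂ _ => (conj_mul_conj_of_mul_eq_self hx₁.2.2 x₂).symm⟩
end

section
/- For a semigroup S and g,h ∈ S¹, the bijection φ_{g,h} : D_{g,h} → D_{h,g}, a ↦ hag, maps H-classes to H-classes: if a ∈ D_{g,h} and c H a with c ∈ D_{g,h}, then hcg H hag in S. -/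
lemma rangeL_eq {M : Type*} [Monoid M] {x y : M}
    (h1 : ∃ w, w * y = x) (h2 : ∃ w, w * x = y) :
    Set.range (fun s : M => s * x) = Set.range (fun s : M => s * y) := by
  obtain ⟨w, hw⟩ := h1; obtain ⟨w', hw'⟩ := h2
  ext z; constructor <;> rintro ⟨s, rfl⟩
  · exact ⟨s * w, by simp [mul_assoc, hw]⟩
  · exact ⟨s * w', by simp [mul_assoc, hw']⟩

lemma rangeR_eq {M : Type*} [Monoid M] {x y : M}
    (h1 : ∃ w, y * w = x) (h2 : ∃ w, x * w = y) :
    Set.range (fun s : M => x * s) = Set.range (fun s : M => y * s) := by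
  obtain ⟨w, hw⟩ := h1; obtain ⟨w', hw'⟩ := h2
  ext z; constructor <;> rintro ⟨s, rfl⟩
  · exact ⟨w * s, by show y * (w * s) = x * s; rw [← mul_assoc, hw]⟩
  · exact ⟨w' * s, by show x * (w' * s) = y * s; rw [← mul_assoc, hw']⟩

theorem phi_maps_Hclasses {S : Type*} [Semigroup S] (g h : WithOne S) (a c : S)
    (ha : g * h * a = (a : WithOne S) ∧ (a : WithOne S) * (g * h) = a)
    (hc : g * h * c = (c : WithOne S) ∧ (c : WithOne S) * (g * h) = c)
    (hH : greenH (c : WithOne S) (a : WithOne S)) :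
    greenH (h * (c : WithOne S) * g) (h * (a : WithOne S) * g) := by
  obtain ⟨hL, hR⟩ := hH
  -- extract witnesses
  have hca : ∃ t : WithOne S, t * a = (c : WithOne S) := by
    have : (c : WithOne S) ∈ Set.range (fun s : WithOne S => s * (a : WithOne S)) := by
      rw [← hL]; exact ⟨1, one_mul _⟩
    exact this
  have hac : ∃ t : WithOne S, t * c = (a : WithOne S) := by
    have : (a : WithOne S) ∈ Set.range (fun s : WithOne S => s * (c : WithOne S)) := by
      rw [hL]; exact ⟨1, one_mul _⟩
    exact this
  have hca' : ∃ t : WithOne S, (a : WithOne S) * t = (c : WithOne S) := by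
    have : (c : WithOne S) ∈ Set.range (fun s : WithOne S => (a : WithOne S) * s) := by
      rw [← hR]; exact ⟨1, mul_one _⟩
    exact this
  have hac' : ∃ t : WithOne S, (c : WithOne S) * t = (a : WithOne S) := by
    have : (a : WithOne S) ∈ Set.range (fun s : WithOne S => (c : WithOne S) * s) := by
      rw [hR]; exact ⟨1, mul_one _⟩
    exact this
  obtain ⟨t, ht⟩ := hca
  obtain ⟨t', ht'⟩ := hac
  obtain ⟨u, hu⟩ := hca'
  obtain ⟨u', hu'⟩ := hac'
  constructor
  · apply rangeL_eq
    · refine ⟨h * t * g, ?_⟩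
      have : h * t * g * (h * (a : WithOne S) * g) = h * (t * (g * h * a)) * g := by
        simp [mul_assoc]
      rw [this, ha.1, ht]
    · refine ⟨h * t' * g, ?_⟩
      have : h * t' * g * (h * (c : WithOne S) * g) = h * (t' * (g * h * c)) * g := by
        simp [mul_assoc]
      rw [this, hc.1, ht']
  · apply rangeR_eq
    · refine ⟨h * u * g, ?_⟩
      have : h * (a : WithOne S) * g * (h * u * g) = h * ((a : WithOne S) * (g * h) * u) * g := by
        simp [mul_assoc]
      rw [this, ha.2, hu]
    · refine ⟨h * u' * g, ?_⟩
      have : h * (c : WithOne S) * g * (h * u' * g) = h * ((c : WithOne S) * (g * h) * u') * g := by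
        simp [mul_assoc]
      rw [this, hc.2, hu']
end
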